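/- Under Algorithm 1, from configuration Conf BW-MR the execution achieves gathering: all robots eventually occupy a single node and remain there forever. -/

import Mathlib

set_option autoImplicit false

/-! ### Luminous myopic robots on an anonymous ring: basic model -/

/-- A configuration of `R` luminous robots with light colors in `C`
on an anonymous ring with `N` nodes (the nodes are `ZMod N`). -/
structure Config (N R : ℕ) (C : Type) where
  pos : Fin R → ZMod N
  light : Fin R → C

namespace Gathering

variable {N R : ℕ} {C : Type}

/-- The set of light colors present at node `u`. -/
def colorsAt (cfg : Config N R C) (u : ZMod N) : Set C :=
  {c | ∃ r, cfg.pos r = u ∧ cfg.light r = c}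

/-- Node `u` hosts at least one robot. -/
def occupiedNode (cfg : Config N R C) (u : ZMod N) : Prop :=
  ∃ r, cfg.pos r = u

/-- The view from node `u` with visibility range `φ`, in orientation `dir`:
the set of colors at signed offset `k`, for `|k| ≤ φ` (and `∅` beyond the range). -/
def nodeView (φ : ℕ) (cfg : Config N R C) (u : ZMod N) (dir : Bool) : ℤ → Set C :=
  fun k => if |k| ≤ (φ : ℤ) then
      colorsAt cfg (u + (if dir then (k : ZMod N) else ((-k : ℤ) : ZMod N)))
    else ∅

/-- Node `u` is a border node: it is occupied, all `φ` nodes on one side are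
empty, and some node within distance `φ` on the other side is occupied. -/
def isBorderNode (φ : ℕ) (cfg : Config N R C) (u : ZMod N) : Prop :=
  occupiedNode cfg u ∧
  ∃ dir : Bool,
    (∀ k : ℤ, 1 ≤ k → k ≤ (φ : ℤ) →
      ¬ occupiedNode cfg (u + (if dir then (k : ZMod N) else ((-k : ℤ) : ZMod N)))) ∧
    (∃ k : ℤ, 1 ≤ k ∧ k ≤ (φ : ℤ) ∧
      occupiedNode cfg (u + (if dir then ((-k : ℤ) : ZMod N) else (k : ZMod N))))

/-- Robot `r` is a border robot. -/
def isBorderRobot (φ : ℕ) (cfg : Config N R C) (r : Fin R) : Prop :=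
  isBorderNode φ cfg (cfg.pos r)

/-- The borders of a configuration: an occupied node together with a direction
in which the next `φ` nodes are all empty (their number is always even). -/
def borderPairs (φ : ℕ) (cfg : Config N R C) : Set (ZMod N × Bool) :=
  {p | occupiedNode cfg p.1 ∧
    ∀ k : ℤ, 1 ≤ k → k ≤ (φ : ℤ) →
      ¬ occupiedNode cfg (p.1 + (if p.2 then (k : ZMod N) else ((-k : ℤ) : ZMod N)))}

/-- Ring distance between two nodes. -/
def ringDist (u v : ZMod N) : ℕ := min (u - v).val (v - u).val

/-- Robots `r` and `r'` can observe each other. -/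
def canSee (φ : ℕ) (cfg : Config N R C) (r r' : Fin R) : Prop :=
  ringDist (cfg.pos r) (cfg.pos r') ≤ φ

/-- The visibility graph of the configuration is connected. -/
def VisConnected (φ : ℕ) (cfg : Config N R C) : Prop :=
  ∀ r r' : Fin R, Relation.ReflTransGen (canSee φ cfg) r r'

/-- The span of a configuration: the least `m` such that all occupied nodes fit
in a window of `m + 1` consecutive nodes.  In a configuration with exactly two
borders this is the distance `D` between the two border nodes. -/
noncomputable def spanDist (cfg : Config N R C) : ℕ :=
  sInf {m : ℕ | ∃ b : ZMod N, ∀ u, occupiedNode cfg u → ∃ i : ℕ, i ≤ m ∧ u = b + (i : ZMod N)}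

/-! ### Algorithms and asynchronous executions -/

/-- A deterministic algorithm for luminous robots in the full-light model:
given the robot's own color and its (oriented) view, output a new color and a
movement (`+1`, `0` or `-1`, relative to the orientation of the view). -/
structure Algo (C : Type) where
  out : C → (ℤ → Set C) → C × SignType

/-- The destination of a movement `m` from node `u`, for view orientation `dir`. -/
def moveTarget (u : ZMod N) (dir : Bool) (m : SignType) : ZMod N :=
  u + (if dir then ((m : ℤ) : ZMod N) else ((-(m : ℤ) : ℤ) : ZMod N))

/-- An execution of algorithm `A` under a fair asynchronous scheduler.
At each instant every robot either stays idle, performs a Look (together with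
the deterministic Compute, recording a plan: a new color and a destination
node; the orientation of the snapshot is chosen adversarially, as robots are
disoriented), becomes visible with its new color (end of the Compute phase,
keeping its pending plan), or performs its atomic Move, completing the cycle.
A robot `r` with `plan t r ≠ none` is a robot whose view may be outdated. -/
structure AsyncExec (N R : ℕ) (C : Type) (φ : ℕ) (A : Algo C) where
  cfg : ℕ → Config N R C
  plan : ℕ → Fin R → Option (C × ZMod N)
  init_plan : ∀ r, plan 0 r = none
  step : ∀ (t : ℕ) (r : Fin R),
      ((cfg (t+1)).pos r = (cfg t).pos r ∧ (cfg (t+1)).light r = (cfg t).light r ∧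
        plan (t+1) r = plan t r)
    ∨ (plan t r = none ∧ (cfg (t+1)).pos r = (cfg t).pos r ∧
        (cfg (t+1)).light r = (cfg t).light r ∧
        ∃ dir : Bool,
          plan (t+1) r =
            some ((A.out ((cfg t).light r) (nodeView φ (cfg t) ((cfg t).pos r) dir)).1,
              moveTarget ((cfg t).pos r) dir
                (A.out ((cfg t).light r) (nodeView φ (cfg t) ((cfg t).pos r) dir)).2))
    ∨ (∃ c u, plan t r = some (c, u) ∧ (cfg (t+1)).pos r = (cfg t).pos r ∧
        (cfg (t+1)).light r = c ∧ plan (t+1) r = some (c, u))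
    ∨ (∃ c u, plan t r = some (c, u) ∧ (cfg (t+1)).pos r = u ∧
        (cfg (t+1)).light r = c ∧ plan (t+1) r = none)
  fair : ∀ (r : Fin R) (t : ℕ), ∃ t', t ≤ t' ∧ plan t' r ≠ none ∧ plan (t'+1) r = none

/-- The execution achieves gathering: from some time on, all robots occupy a
single node and remain there forever. -/
def AchievesGathering {N R : ℕ} {C : Type} {φ : ℕ} {A : Algo C}
    (e : AsyncExec N R C φ A) : Prop :=
  ∃ (t : ℕ) (u : ZMod N), ∀ t', t ≤ t' → ∀ r, (e.cfg t').pos r = u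

/-! ### Initial configurations -/

/-- The robots occupy a segment `G'` of `Minit` nodes with base (border) node
`b`: both endpoints of the segment are occupied and are borders (the `φ` nodes
beyond each endpoint are empty), every occupied node lies in the segment,
consecutive occupied nodes are at distance at most `φ` (`H_init ≤ φ`, i.e. the
visibility graph is connected), and `Oinit` is the number of occupied nodes of
the segment. -/
def SegmentInitOn (φ : ℕ) (cfg : Config N R C) (b : ZMod N) (Minit Oinit : ℕ) : Prop :=
  2 ≤ Minit ∧
  occupiedNode cfg b ∧ occupiedNode cfg (b + ((Minit - 1 : ℕ) : ZMod N)) ∧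
  (∀ u, occupiedNode cfg u → ∃ i : ℕ, i < Minit ∧ u = b + (i : ZMod N)) ∧
  (∀ k : ℕ, 1 ≤ k → k ≤ φ →
    ¬ occupiedNode cfg (b - (k : ZMod N)) ∧
    ¬ occupiedNode cfg (b + ((Minit - 1 : ℕ) : ZMod N) + (k : ZMod N))) ∧
  (∀ i : ℕ, i + 1 < Minit → occupiedNode cfg (b + (i : ZMod N)) →
    ∃ j : ℕ, i < j ∧ j ≤ i + φ ∧ j < Minit ∧ occupiedNode cfg (b + (j : ZMod N))) ∧
  Oinit = {i : Fin Minit | occupiedNode cfg (b + ((i : ℕ) : ZMod N))}.ncard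

/-- Admissible initial configuration: all robots have the color `white`, and
the robots occupy a segment with two borders and connected visibility graph. -/
def AdmissibleInit (φ : ℕ) (cfg : Config N R C) (white : C) (Minit Oinit : ℕ) : Prop :=
  (∀ r, cfg.light r = white) ∧ ∃ b : ZMod N, SegmentInitOn φ cfg b Minit Oinit

/-! ### Edge-view symmetry and cautiousness -/

/-- Robots `r1` and `r2` are indistinguishable: they have the same color and
the same view (up to reversal, as robots are disoriented). -/
def viewsEq (φ : ℕ) (cfg : Config N R C) (r1 r2 : Fin R) : Prop :=
  cfg.light r1 = cfg.light r2 ∧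
  (nodeView φ cfg (cfg.pos r1) true = nodeView φ cfg (cfg.pos r2) true ∨
   nodeView φ cfg (cfg.pos r1) true = nodeView φ cfg (cfg.pos r2) false)

/-- Definition 20: a configuration is edge-view-symmetric if at least two
distinct nodes host robots and there is an edge `(u_i, u_{i+1})` such that for
every `k ≥ 0`, every robot at `u_{i-k}` has an indistinguishable counterpart at
`u_{i+k+1}`. -/
def EdgeViewSymmetric (φ : ℕ) (cfg : Config N R C) : Prop :=
  (∃ u v : ZMod N, u ≠ v ∧ occupiedNode cfg u ∧ occupiedNode cfg v) ∧
  ∃ i : ZMod N, ∀ (k : ℕ) (r1 : Fin R), cfg.pos r1 = i - (k : ZMod N) →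
    ∃ r2 : Fin R, cfg.pos r2 = i + (k : ZMod N) + 1 ∧ viewsEq φ cfg r1 r2

/-- Definition 23: an algorithm is cautious if robots only ever move toward
other occupied nodes (they never expand the span of the visibility graph). -/
def Cautious (φ : ℕ) (A : Algo C) : Prop :=
  ∀ (c : C) (v : ℤ → Set C),
    ((A.out c v).2 = 1 → ∃ k : ℤ, 1 ≤ k ∧ k ≤ (φ : ℤ) ∧ v k ≠ ∅) ∧
    ((A.out c v).2 = -1 → ∃ k : ℤ, 1 ≤ k ∧ k ≤ (φ : ℤ) ∧ v (-k) ≠ ∅)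

end Gathering

namespace Gathering

/-! ### Algorithm 1 (three colors) -/

/-- The three light colors of Algorithm 1. -/
inductive C3 : Type
  | White
  | Red
  | Blue
deriving DecidableEq

open Classical in
/-- The rules of Algorithm 1, for a view oriented so that the `φ` nodes at
negative offsets are empty (the observing robot is a border robot and the
positive direction points inward), in priority order
R1, R2a, R2b, R3a, R3b, R4a, R4b, R5. -/
noncomputable def algo1Rules (φ : ℕ) (c : C3) (v : ℤ → Set C3) : C3 × SignType :=
  -- R1 : ∅^φ [W!] (¬∅^φ)  ::  R
  if c = C3.White ∧ v 0 = {C3.White} then (C3.Red, 0)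
  -- R2a : ∅^φ [R!] (∅, B!) (¬(∅^(φ-1)))  ::  B, →
  else if c = C3.Red ∧ v 0 = {C3.Red} ∧ (v 1 = ∅ ∨ v 1 = {C3.Blue}) ∧
      ¬ (∀ k : ℤ, 2 ≤ k → k ≤ (φ : ℤ) → v k = ∅) then (C3.Blue, 1)
  -- R2b : ∅^φ [R!] (W) (?^(φ-1))  ::  B, →
  else if c = C3.Red ∧ v 0 = {C3.Red} ∧ C3.White ∈ v 1 ∧
      (∀ k : ℤ, 2 ≤ k → k ≤ (φ : ℤ) → v k ≠ ∅) then (C3.Blue, 1)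
  -- R3a : ∅^φ [B!] (∅, R!) (¬(∅^(φ-1)))  ::  R, →
  else if c = C3.Blue ∧ v 0 = {C3.Blue} ∧ (v 1 = ∅ ∨ v 1 = {C3.Red}) ∧
      ¬ (∀ k : ℤ, 2 ≤ k → k ≤ (φ : ℤ) → v k = ∅) then (C3.Red, 1)
  -- R3b : ∅^φ [B!] (W) (?^(φ-1))  ::  R, →
  else if c = C3.Blue ∧ v 0 = {C3.Blue} ∧ C3.White ∈ v 1 ∧
      (∀ k : ℤ, 2 ≤ k → k ≤ (φ : ℤ) → v k ≠ ∅) then (C3.Red, 1)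
  -- R4a : ∅^φ [R [W]] (¬∅^φ)  ::  R
  else if c = C3.White ∧ C3.Red ∈ v 0 then (C3.Red, 0)
  -- R4b : ∅^φ [B [W]] (¬∅^φ)  ::  B
  else if c = C3.White ∧ C3.Blue ∈ v 0 then (C3.Blue, 0)
  -- R5 : ∅^φ [R!] (B!) (∅^(φ-1))  ::  B, →
  else if c = C3.Red ∧ v 0 = {C3.Red} ∧ v 1 = {C3.Blue} ∧
      (∀ k : ℤ, 2 ≤ k → k ≤ (φ : ℤ) → v k = ∅) then (C3.Blue, 1)
  else (c, 0)

open Classical in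
/-- Algorithm 1: the rules are applied in the orientation in which the `φ`
nearest nodes on one side are all empty.  A robot seeing no other robot does
nothing (rule R0), and no rule is enabled for a non-border robot. -/
noncomputable def algo1 (φ : ℕ) : Algo C3 where
  out := fun c v =>
    if (∀ k : ℤ, 1 ≤ k → k ≤ (φ : ℤ) → v (-k) = ∅) ∧
       (∀ k : ℤ, 1 ≤ k → k ≤ (φ : ℤ) → v k = ∅) then (c, 0)
    else if ∀ k : ℤ, 1 ≤ k → k ≤ (φ : ℤ) → v (-k) = ∅ then algo1Rules φ c v
    else if ∀ k : ℤ, 1 ≤ k → k ≤ (φ : ℤ) → v k = ∅ then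
      ((algo1Rules φ c (fun k => v (-k))).1, -(algo1Rules φ c (fun k => v (-k))).2)
    else (c, 0)

/-! ### Algorithm 2 (four colors) -/

/-- The four light colors of Algorithm 2. -/
inductive C4 : Type
  | White
  | Red
  | Blue
  | Purple
deriving DecidableEq

open Classical in
/-- The rules of Algorithm 2, for a view oriented so that the `φ` nodes at
negative offsets are empty, in priority order
R1, R2a-1, R2a-2, R2b, R3a-1, R3a-2, R3b, R4a, R4b, R5a, R5b-1, R5b-2, R5b-3. -/
noncomputable def algo2Rules (φ : ℕ) (c : C4) (v : ℤ → Set C4) : C4 × SignType :=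
  -- R1 : ∅^φ [W!] (¬∅^φ)  ::  R
  if c = C4.White ∧ v 0 = {C4.White} then (C4.Red, 0)
  -- R2a-1 : ∅^φ [R!] (∅) (¬(∅^(φ-1)))  ::  →
  else if c = C4.Red ∧ v 0 = {C4.Red} ∧ v 1 = ∅ ∧
      ¬ (∀ k : ℤ, 2 ≤ k → k ≤ (φ : ℤ) → v k = ∅) then (C4.Red, 1)
  -- R2a-2 : ∅^φ [R!] (¬W, R) (¬(∅^(φ-1)))  ::  →
  else if c = C4.Red ∧ v 0 = {C4.Red} ∧ (C4.Red ∈ v 1 ∧ C4.White ∉ v 1) ∧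
      ¬ (∀ k : ℤ, 2 ≤ k → k ≤ (φ : ℤ) → v k = ∅) then (C4.Red, 1)
  -- R2b : ∅^φ [R!] (W) (?^(φ-1))  ::  B, →
  else if c = C4.Red ∧ v 0 = {C4.Red} ∧ C4.White ∈ v 1 ∧
      (∀ k : ℤ, 2 ≤ k → k ≤ (φ : ℤ) → v k ≠ ∅) then (C4.Blue, 1)
  -- R3a-1 : ∅^φ [B!] (∅) (¬(∅^(φ-1)))  ::  →
  else if c = C4.Blue ∧ v 0 = {C4.Blue} ∧ v 1 = ∅ ∧
      ¬ (∀ k : ℤ, 2 ≤ k → k ≤ (φ : ℤ) → v k = ∅) then (C4.Blue, 1)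
  -- R3a-2 : ∅^φ [B!] (¬W, B) (¬(∅^(φ-1)))  ::  →
  else if c = C4.Blue ∧ v 0 = {C4.Blue} ∧ (C4.Blue ∈ v 1 ∧ C4.White ∉ v 1) ∧
      ¬ (∀ k : ℤ, 2 ≤ k → k ≤ (φ : ℤ) → v k = ∅) then (C4.Blue, 1)
  -- R3b : ∅^φ [B!] (W) (?^(φ-1))  ::  R, →
  else if c = C4.Blue ∧ v 0 = {C4.Blue} ∧ C4.White ∈ v 1 ∧
      (∀ k : ℤ, 2 ≤ k → k ≤ (φ : ℤ) → v k ≠ ∅) then (C4.Red, 1)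
  -- R4a : ∅^φ [R [W]] (¬∅^φ)  ::  R
  else if c = C4.White ∧ C4.Red ∈ v 0 then (C4.Red, 0)
  -- R4b : ∅^φ [B [W]] (¬∅^φ)  ::  B
  else if c = C4.White ∧ C4.Blue ∈ v 0 then (C4.Blue, 0)
  -- R5a : ∅^φ [?] (P) (∅^(φ-1))  ::  →
  else if C4.Purple ∈ v 1 ∧ (∀ k : ℤ, 2 ≤ k → k ≤ (φ : ℤ) → v k = ∅) then (c, 1)
  -- R5b-1 : ∅^φ [B!] (R!) (∅^(φ-1))  ::  P
  else if c = C4.Blue ∧ v 0 = {C4.Blue} ∧ v 1 = {C4.Red} ∧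
      (∀ k : ℤ, 2 ≤ k → k ≤ (φ : ℤ) → v k = ∅) then (C4.Purple, 0)
  -- R5b-2 : ∅^φ [B!] (R, B) (∅^(φ-1))  ::  P
  else if c = C4.Blue ∧ v 0 = {C4.Blue} ∧ (C4.Red ∈ v 1 ∧ C4.Blue ∈ v 1) ∧
      (∀ k : ℤ, 2 ≤ k → k ≤ (φ : ℤ) → v k = ∅) then (C4.Purple, 0)
  -- R5b-3 : ∅^φ [R [B]] (R!) (∅^(φ-1))  ::  P
  else if c = C4.Blue ∧ C4.Red ∈ v 0 ∧ v 1 = {C4.Red} ∧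
      (∀ k : ℤ, 2 ≤ k → k ≤ (φ : ℤ) → v k = ∅) then (C4.Purple, 0)
  else (c, 0)

open Classical in
/-- Algorithm 2: the rules are applied in the orientation in which the `φ`
nearest nodes on one side are all empty.  A robot seeing no other robot does
nothing (rule R0), and no rule is enabled for a non-border robot. -/
noncomputable def algo2 (φ : ℕ) : Algo C4 where
  out := fun c v =>
    if (∀ k : ℤ, 1 ≤ k → k ≤ (φ : ℤ) → v (-k) = ∅) ∧
       (∀ k : ℤ, 1 ≤ k → k ≤ (φ : ℤ) → v k = ∅) then (c, 0)
    else if ∀ k : ℤ, 1 ≤ k → k ≤ (φ : ℤ) → v (-k) = ∅ then algo2Rules φ c v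
    else if ∀ k : ℤ, 1 ≤ k → k ≤ (φ : ℤ) → v k = ∅ then
      ((algo2Rules φ c (fun k => v (-k))).1, -(algo2Rules φ c (fun k => v (-k))).2)
    else (c, 0)

/-- `#O_W`: the number of nodes hosting a White robot that are not border
nodes. -/
noncomputable def numWhiteNonBorder {N R : ℕ} (φ : ℕ) (cfg : Config N R C4) : ℕ :=
  {u : ZMod N | C4.White ∈ colorsAt cfg u ∧ ¬ isBorderNode φ cfg u}.ncard

end Gathering

namespace Gathering

/-- Configuration `Conf BW-MR` (with `D = 1`): one border node `u` contains
Blue robots and possibly White robots, all without outdated views; the other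
border node `v` contains Red robots and possibly Blue robots, where a robot of
`v` either has no outdated view (and is then Red) or has a pending plan to
change its color to Blue and move to `u`. -/
def ConfBWMR {N R φ : ℕ} {A : Algo C3} (e : AsyncExec N R C3 φ A) (t : ℕ) : Prop :=
  ∃ u v : ZMod N, (v = u + 1 ∨ v = u - 1) ∧
    isBorderNode φ (e.cfg t) u ∧ isBorderNode φ (e.cfg t) v ∧
    (∀ w, occupiedNode (e.cfg t) w → w = u ∨ w = v) ∧
    (∀ r, (e.cfg t).pos r = u →
      ((e.cfg t).light r = C3.Blue ∨ (e.cfg t).light r = C3.White) ∧ e.plan t r = none) ∧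
    C3.Blue ∈ colorsAt (e.cfg t) u ∧
    (∀ r, (e.cfg t).pos r = v →
      ((e.cfg t).light r = C3.Red ∨ (e.cfg t).light r = C3.Blue) ∧
      (e.plan t r = none ∨ e.plan t r = some (C3.Blue, u)) ∧
      (e.plan t r = none → (e.cfg t).light r = C3.Red)) ∧
    C3.Red ∈ colorsAt (e.cfg t) v

/-- Configuration `Conf RW-MB` (with `D = 1`): one border node `u` contains
Red robots and possibly White robots, all without outdated views; the other
border node `v` contains Blue robots and possibly Red robots, where a robot of
`v` either has no outdated view (and is then Blue) or has a pending plan to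
change its color to Red and move to `u`. -/
def ConfRWMB {N R φ : ℕ} {A : Algo C3} (e : AsyncExec N R C3 φ A) (t : ℕ) : Prop :=
  ∃ u v : ZMod N, (v = u + 1 ∨ v = u - 1) ∧
    isBorderNode φ (e.cfg t) u ∧ isBorderNode φ (e.cfg t) v ∧
    (∀ w, occupiedNode (e.cfg t) w → w = u ∨ w = v) ∧
    (∀ r, (e.cfg t).pos r = u →
      ((e.cfg t).light r = C3.Red ∨ (e.cfg t).light r = C3.White) ∧ e.plan t r = none) ∧
    C3.Red ∈ colorsAt (e.cfg t) u ∧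
    (∀ r, (e.cfg t).pos r = v →
      ((e.cfg t).light r = C3.Red ∨ (e.cfg t).light r = C3.Blue) ∧
      (e.plan t r = none ∨ e.plan t r = some (C3.Red, u)) ∧
      (e.plan t r = none → (e.cfg t).light r = C3.Blue)) ∧
    C3.Blue ∈ colorsAt (e.cfg t) v

end Gathering

/-!
From `Conf BW-MR` the robots stay on the two adjacent border nodes `u` and `v`: robots at `u` are
White or Blue, never leave, and at least one of them is Blue; robots at `v` are Red, or Blue on
their way to `u` (`BWMRInv`). So each robot either reaches `u` and stays there, or stays at `v`
forever. In the latter case all robots at `v` are eventually Red and, by rule R4b, all robots at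
`u` Blue; the next Look of a robot stuck at `v` then applies rule R5 and sends it to `u`, a
contradiction.
-/

namespace Gathering

open Filter

variable {N R φ : ℕ} {C : Type}

lemma intCast_zmod_ne_zero {j : ℤ} (h0 : j ≠ 0) (hlt : |j| < N) : (j : ZMod N) ≠ 0 := by
  rw [Ne, ZMod.intCast_zmod_eq_zero_iff_dvd]
  exact fun hdvd => h0 (Int.eq_zero_of_abs_lt_dvd hdvd hlt)

lemma exists_sign_of_adjacent {x y : ZMod N} (hy : y = x + 1 ∨ y = x - 1) :
    ∃ s : ℤ, (s = 1 ∨ s = -1) ∧ y = x + s := by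
  rcases hy with rfl | rfl
  · exact ⟨1, .inl rfl, by simp⟩
  · exact ⟨-1, .inr rfl, by simp [sub_eq_add_neg]⟩

lemma adjacent_symm {x y : ZMod N} (hy : y = x + 1 ∨ y = x - 1) : x = y + 1 ∨ x = y - 1 := by
  rcases hy with rfl | rfl
  · exact .inr (by ring)
  · exact .inl (by ring)

lemma ne_of_adjacent (hN : 2 ≤ N) {x y : ZMod N} (hy : y = x + 1 ∨ y = x - 1) : x ≠ y := by
  obtain ⟨s, hs, rfl⟩ := exists_sign_of_adjacent hy
  have hs0 : s ≠ 0 := by rcases hs with rfl | rfl <;> decide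
  have hs1 : |s| < N := by rcases hs with rfl | rfl <;> simp <;> omega
  simpa using intCast_zmod_ne_zero hs0 hs1

lemma colorsAt_eq_empty_iff (cfg : Config N R C) (x : ZMod N) :
    colorsAt cfg x = ∅ ↔ ¬ occupiedNode cfg x := by
  simp [colorsAt, occupiedNode, Set.eq_empty_iff_forall_notMem]

lemma colorsAt_eq_singleton {cfg : Config N R C} {x : ZMod N} {c : C}
    (hex : ∃ r, cfg.pos r = x ∧ cfg.light r = c) (hall : ∀ r, cfg.pos r = x → cfg.light r = c) :
    colorsAt cfg x = {c} := by
  ext c'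
  constructor
  · rintro ⟨r, hr, rfl⟩
    exact hall r hr
  · rintro rfl
    exact hex

lemma add_two_le_of_isBorderNode (hN : 2 ≤ N) {cfg : Config N R C} {x y : ZMod N}
    (hx : isBorderNode φ cfg x) (hy : occupiedNode cfg y) (hxy : y = x + 1 ∨ y = x - 1) :
    φ + 2 ≤ N := by
  obtain ⟨-, dir, hempty, -⟩ := hx
  -- otherwise the `φ` empty nodes on one side of `x` reach round to both neighbours of `x`
  by_contra! hlt
  have h1 := hempty 1 le_rfl (by omega)
  have h2 := hempty (N - 1) (by omega) (by omega)
  rcases hxy with rfl | rfl <;> cases dir <;> simp_all [sub_eq_add_neg]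

/-- The plan recorded by a Look in `AsyncExec.step`. -/
def lookPlan (A : Algo C) (φ : ℕ) (cfg : Config N R C) (x : ZMod N) (c : C) (dir : Bool) :
    C × ZMod N :=
  ((A.out c (nodeView φ cfg x dir)).1, moveTarget x dir (A.out c (nodeView φ cfg x dir)).2)

/-- The view, oriented towards `B`, from a node with colors `A` whose only occupied node in
range is the adjacent one, with colors `B`. -/
def twoNodeView (A B : Set C) : ℤ → Set C :=
  fun k => if k = 0 then A else if k = 1 then B else ∅

@[simp] lemma twoNodeView_zero (A B : Set C) : twoNodeView A B 0 = A := rfl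

@[simp] lemma twoNodeView_one (A B : Set C) : twoNodeView A B 1 = B := rfl

lemma twoNodeView_of_ne_zero_of_ne_one (A B : Set C) {k : ℤ} (h0 : k ≠ 0) (h1 : k ≠ 1) :
    twoNodeView A B k = ∅ := by
  simp [twoNodeView, h0, h1]

lemma twoNodeView_of_two_le (A B : Set C) {k : ℤ} (hk : 2 ≤ k) : twoNodeView A B k = ∅ :=
  twoNodeView_of_ne_zero_of_ne_one A B (by omega) (by omega)

section TwoNodes

variable {cfg : Config N R C} {x y : ZMod N} {s : ℤ}

lemma colorsAt_add_of_two_nodes (hs : s = 1 ∨ s = -1) (hy : y = x + s)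
    (hocc : ∀ w, occupiedNode cfg w → w = x ∨ w = y) {j : ℤ} (hj : |j| + 2 ≤ N) :
    colorsAt cfg (x + j) = twoNodeView (colorsAt cfg x) (colorsAt cfg y) (s * j) := by
  have hss : s * s = 1 := by rcases hs with rfl | rfl <;> rfl
  rcases eq_or_ne j 0 with rfl | hj0
  · simp
  rcases eq_or_ne j s with rfl | hjs
  · simp [hss, hy]
  have hsj0 : s * j ≠ 0 := mul_ne_zero (by rcases hs with rfl | rfl <;> decide) hj0
  have hsj1 : s * j ≠ 1 := fun h => hjs (by rcases hs with rfl | rfl <;> omega)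
  rw [twoNodeView_of_ne_zero_of_ne_one _ _ hsj0 hsj1, colorsAt_eq_empty_iff]
  intro hxj
  rcases hocc _ hxj with h | h
  · exact intCast_zmod_ne_zero (N := N) hj0 (by omega) (by simpa using h)
  · have hs1 : |s| = 1 := by rcases hs with rfl | rfl <;> rfl
    have hjs' : |j - s| < N := by linarith [abs_sub j s]
    refine intCast_zmod_ne_zero (sub_ne_zero.mpr hjs) hjs' ?_
    rw [hy, add_right_inj] at h
    push_cast
    rw [h, sub_self]

lemma nodeView_of_two_nodes (hφ : 1 ≤ φ) (hφN : φ + 2 ≤ N) (hs : s = 1 ∨ s = -1)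
    (hy : y = x + s) (hocc : ∀ w, occupiedNode cfg w → w = x ∨ w = y) (dir : Bool) :
    nodeView φ cfg x dir =
      fun k => twoNodeView (colorsAt cfg x) (colorsAt cfg y) ((if dir then s else -s) * k) := by
  funext k
  by_cases hk : |k| ≤ φ
  · have key := colorsAt_add_of_two_nodes hs hy hocc (j := if dir then k else -k)
      (by cases dir <;> simp only [Bool.false_eq_true, if_false, if_true, abs_neg] <;> omega)
    cases dir <;> simpa [nodeView, hk] using key
  · have hσk : |(if dir then s else -s) * k| = |k| := by
      rw [abs_mul]; rcases hs with rfl | rfl <;> cases dir <;> simp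
    simp only [nodeView, if_neg hk]
    rw [twoNodeView_of_ne_zero_of_ne_one]
    · intro h; rw [h, abs_zero] at hσk; omega
    · intro h; rw [h, abs_one] at hσk; omega

end TwoNodes

section Algo1

lemma algo1Rules_snd_eq_zero_or_one (c : C3) (v : ℤ → Set C3) :
    (algo1Rules φ c v).2 = 0 ∨ (algo1Rules φ c v).2 = 1 := by
  unfold algo1Rules; split_ifs <;> simp

lemma algo1Rules_of_blue_node {A B : Set C3} {c : C3} (hc : c ≠ .Red)
    (hBlue : C3.Blue ∈ A) (hRed : C3.Red ∉ A) (hWhite : C3.White ∉ B) :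
    algo1Rules φ c (twoNodeView A B) = (.Blue, 0) := by
  have hA : A ≠ {C3.White} := fun h => by simp [h] at hBlue
  have hfar : ∀ k : ℤ, 2 ≤ k → k ≤ φ → twoNodeView A B k = ∅ := fun k hk _ =>
    twoNodeView_of_two_le A B hk
  cases c <;> simp_all [algo1Rules, eq_true hfar]

lemma algo1Rules_red (A B : Set C3) :
    algo1Rules φ .Red (twoNodeView A B) = (.Blue, 1) ∨
      algo1Rules φ .Red (twoNodeView A B) = (.Red, 0) := by
  unfold algo1Rules; split_ifs <;> simp_all

/-- Rule R5. -/
lemma algo1Rules_red_blue : algo1Rules φ .Red (twoNodeView {C3.Red} {C3.Blue}) = (.Blue, 1) := by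
  have hfar : ∀ k : ℤ, 2 ≤ k → k ≤ φ → twoNodeView {C3.Red} {C3.Blue} k = ∅ := fun k hk _ =>
    twoNodeView_of_two_le _ _ hk
  simp [algo1Rules, eq_true hfar]

lemma algo1_out_twoNodeView_empty (A : Set C3) (c : C3) {σ : ℤ} (hσ : σ ≠ 0) :
    (algo1 φ).out c (fun k => twoNodeView A ∅ (σ * k)) = (c, 0) := by
  have hempty : ∀ k : ℤ, k ≠ 0 → twoNodeView A ∅ (σ * k) = ∅ := fun k hk => by
    simp [twoNodeView, hσ, hk]
  simp only [algo1]
  rw [if_pos ⟨fun k hk _ => hempty _ (by omega), fun k hk _ => hempty _ (by omega)⟩]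

lemma algo1_out_twoNodeView (hφ : 1 ≤ φ) {A B : Set C3} (hB : B ≠ ∅) (c : C3) {σ : ℤ}
    (hσ : σ = 1 ∨ σ = -1) :
    (algo1 φ).out c (fun k => twoNodeView A B (σ * k)) =
      ((algo1Rules φ c (twoNodeView A B)).1,
        SignType.sign σ * (algo1Rules φ c (twoNodeView A B)).2) := by
  have hφ' : (1 : ℤ) ≤ φ := by exact_mod_cast hφ
  have hneg : ∀ k : ℤ, 1 ≤ k → k ≤ φ → twoNodeView A B (-k) = ∅ := fun k hk _ =>
    twoNodeView_of_ne_zero_of_ne_one A B (by omega) (by omega)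
  rcases hσ with rfl | rfl
  · simp only [one_mul, algo1]
    rw [if_neg fun h => hB (h.2 1 le_rfl hφ'), if_pos hneg]
    simp
  · simp only [algo1, neg_mul, one_mul, neg_neg]
    rw [if_neg fun h => hB (h.1 1 le_rfl hφ'), if_neg fun h => hB (h 1 le_rfl hφ'), if_pos hneg]
    simp

variable {cfg : Config N R C3} {x y : ZMod N}

lemma lookPlan_algo1_of_two_nodes (hφ : 1 ≤ φ) (hφN : φ + 2 ≤ N) (hy : y = x + 1 ∨ y = x - 1)
    (hocc : ∀ w, occupiedNode cfg w → w = x ∨ w = y) (hyocc : occupiedNode cfg y)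
    (c : C3) (dir : Bool) :
    lookPlan (algo1 φ) φ cfg x c dir =
      ((algo1Rules φ c (twoNodeView (colorsAt cfg x) (colorsAt cfg y))).1,
        if (algo1Rules φ c (twoNodeView (colorsAt cfg x) (colorsAt cfg y))).2 = 1 then y
        else x) := by
  obtain ⟨s, hs, hys⟩ := exists_sign_of_adjacent hy
  have hσ : (if dir then s else -s) = 1 ∨ (if dir then s else -s) = -1 := by
    rcases hs with rfl | rfl <;> cases dir <;> simp
  have hB : colorsAt cfg y ≠ ∅ := by rwa [Ne, colorsAt_eq_empty_iff, not_not]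
  unfold lookPlan
  rw [nodeView_of_two_nodes hφ hφN hs hys hocc, algo1_out_twoNodeView hφ hB c hσ]
  rcases algo1Rules_snd_eq_zero_or_one (φ := φ) c (twoNodeView (colorsAt cfg x) (colorsAt cfg y))
    with h | h <;> rw [h] <;> rcases hs with rfl | rfl <;> cases dir <;> simp [moveTarget, hys]

lemma lookPlan_algo1_of_lone_node (hφ : 1 ≤ φ) (hφN : φ + 2 ≤ N) (hy : y = x + 1 ∨ y = x - 1)
    (hocc : ∀ w, occupiedNode cfg w → w = x ∨ w = y) (hyocc : ¬ occupiedNode cfg y)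
    (c : C3) (dir : Bool) :
    lookPlan (algo1 φ) φ cfg x c dir = (c, x) := by
  obtain ⟨s, hs, hys⟩ := exists_sign_of_adjacent hy
  have hσ : (if dir then s else -s) ≠ 0 := by rcases hs with rfl | rfl <;> cases dir <;> simp
  unfold lookPlan
  rw [nodeView_of_two_nodes hφ hφN hs hys hocc, (colorsAt_eq_empty_iff cfg y).2 hyocc,
    algo1_out_twoNodeView_empty _ c hσ]
  cases dir <;> simp [moveTarget]

end Algo1

namespace AsyncExec

variable {A : Algo C} (e : AsyncExec N R C φ A) (t : ℕ) (r : Fin R)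

lemma pos_succ :
    (e.cfg (t+1)).pos r = (e.cfg t).pos r ∨ ∃ c, e.plan t r = some (c, (e.cfg (t+1)).pos r) := by
  rcases e.step t r with ⟨hp, -⟩ | ⟨-, hp, -⟩ | ⟨_, _, -, hp, -⟩ | ⟨c, w, hpl, hp, -⟩
  · exact .inl hp
  · exact .inl hp
  · exact .inl hp
  · exact .inr ⟨c, hp ▸ hpl⟩

lemma light_succ :
    (e.cfg (t+1)).light r = (e.cfg t).light r ∨
      ∃ w, e.plan t r = some ((e.cfg (t+1)).light r, w) := by
  rcases e.step t r with ⟨-, hl, -⟩ | ⟨-, -, hl, -⟩ | ⟨c, w, hpl, -, hl, -⟩ | ⟨c, w, hpl, -, hl, -⟩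
  · exact .inl hl
  · exact .inl hl
  · exact .inr ⟨w, hl ▸ hpl⟩
  · exact .inr ⟨w, hl ▸ hpl⟩

lemma plan_succ_of_eq_none (h : e.plan t r = none) :
    e.plan (t+1) r = none ∨
      ∃ dir, e.plan (t+1) r =
        some (lookPlan A φ (e.cfg t) ((e.cfg t).pos r) ((e.cfg t).light r) dir) := by
  rcases e.step t r with ⟨-, -, hpl⟩ | ⟨-, -, -, dir, hpl⟩ | ⟨_, _, hpl, -⟩ | ⟨_, _, hpl, -⟩
  · exact .inl (hpl.trans h)
  · exact .inr ⟨dir, hpl⟩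
  all_goals simp [h] at hpl

lemma plan_succ_of_eq_some {c : C} {w : ZMod N} (h : e.plan t r = some (c, w)) :
    e.plan (t+1) r = some (c, w) ∨ ((e.cfg (t+1)).pos r = w ∧ (e.cfg (t+1)).light r = c) := by
  rcases e.step t r with ⟨-, -, hpl⟩ | ⟨hpl, -⟩ | ⟨c', w', hpl', -, -, hpl⟩ |
    ⟨c', w', hpl', hp, hl, -⟩
  · exact .inl (hpl.trans h)
  · simp [h] at hpl
  · exact .inl (hpl.trans (hpl'.symm.trans h))
  · obtain ⟨rfl, rfl⟩ : c = c' ∧ w = w' := by simpa [h] using hpl'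
    exact .inr ⟨hp, hl⟩

lemma exists_pos_light_of_plan_eq_some {c : C} {w : ZMod N} (h : e.plan t r = some (c, w)) :
    ∃ t' > t, (e.cfg t').pos r = w ∧ (e.cfg t').light r = c := by
  by_contra! hno
  have hkeep : ∀ n, e.plan (t + n) r = some (c, w) := by
    intro n
    induction n with
    | zero => exact h
    | succ n ih =>
      refine (e.plan_succ_of_eq_some (t + n) r ih).resolve_right fun ⟨hp, hl⟩ => ?_
      exact hno (t + n + 1) (by omega) hp hl
  obtain ⟨t1, ht1, -, hnone⟩ := e.fair r t
  have := hkeep (t1 + 1 - t)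
  rw [show t + (t1 + 1 - t) = t1 + 1 by omega, hnone] at this
  simp at this

lemma exists_look : ∃ s ≥ t, ∃ dir,
    e.plan (s+1) r = some (lookPlan A φ (e.cfg s) ((e.cfg s).pos r) ((e.cfg s).light r) dir) := by
  by_contra! hno
  obtain ⟨t1, ht1, -, hnone⟩ := e.fair r t
  have hidle : ∀ n, e.plan (t1 + 1 + n) r = none := by
    intro n
    induction n with
    | zero => exact hnone
    | succ n ih =>
      exact (e.plan_succ_of_eq_none _ r ih).resolve_right fun ⟨dir, h⟩ => hno _ (by omega) dir h
  obtain ⟨t2, ht2, hsome, -⟩ := e.fair r (t1 + 1)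
  exact hsome (by simpa [show t1 + 1 + (t2 - (t1 + 1)) = t2 by omega] using hidle (t2 - (t1 + 1)))

lemma local_succ (P : ZMod N → C → Option (C × ZMod N) → Prop)
    (hplan : ∀ x c₀ c w, P x c₀ (some (c, w)) → P x c (some (c, w)) ∧ P w c none)
    (hlook : P ((e.cfg t).pos r) ((e.cfg t).light r) none → ∀ dir,
      P ((e.cfg t).pos r) ((e.cfg t).light r)
        (some (lookPlan A φ (e.cfg t) ((e.cfg t).pos r) ((e.cfg t).light r) dir)))
    (h : P ((e.cfg t).pos r) ((e.cfg t).light r) (e.plan t r)) :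
    P ((e.cfg (t+1)).pos r) ((e.cfg (t+1)).light r) (e.plan (t+1) r) := by
  rcases e.step t r with ⟨hp, hl, hpl⟩ | ⟨hpn, hp, hl, dir, hpl⟩ | ⟨c, w, hpc, hp, hl, hpl⟩ |
    ⟨c, w, hpc, hp, hl, hpl⟩
  · rwa [hp, hl, hpl]
  · rw [hp, hl, hpl]; exact hlook (hpn ▸ h) dir
  · rw [hp, hl, hpl]; exact (hplan _ _ _ _ (hpc ▸ h)).1
  · rw [hp, hl, hpl]; exact (hplan _ _ _ _ (hpc ▸ h)).2

end AsyncExec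

/-- The local states (position, light, pending plan) reachable from `Conf BW-MR` with border
nodes `u` and `v`. -/
def BWMRLocal (u v x : ZMod N) (c : C3) (p : Option (C3 × ZMod N)) : Prop :=
  x = u ∧ (c = .White ∧ (p = none ∨ p = some (.White, u) ∨ p = some (.Blue, u)) ∨
      c = .Blue ∧ (p = none ∨ p = some (.Blue, u))) ∨
    x = v ∧ (c = .Red ∧ (p = none ∨ p = some (.Red, v) ∨ p = some (.Blue, u)) ∨
      c = .Blue ∧ p = some (.Blue, u))

namespace BWMRLocal

variable {u v x w : ZMod N} {c₀ c : C3} {p : Option (C3 × ZMod N)}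

lemma of_plan (h : BWMRLocal u v x c₀ (some (c, w))) :
    BWMRLocal u v x c (some (c, w)) ∧ BWMRLocal u v w c none := by
  unfold BWMRLocal at *; aesop

lemma eq_or_eq (h : BWMRLocal u v x c p) : x = u ∨ x = v := by
  unfold BWMRLocal at h; tauto

lemma ne_red_of_eq_u (huv : u ≠ v) (h : BWMRLocal u v u c p) : c ≠ .Red := by
  unfold BWMRLocal at h; aesop

lemma target_of_eq_u (h : BWMRLocal u v u c p) {c' : C3} {w : ZMod N}
    (hp : p = some (c', w)) : w = u := by
  unfold BWMRLocal at h; aesop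

lemma of_eq_u_blue (h : BWMRLocal u v u .Blue p) :
    p = none ∨ p = some (.Blue, u) := by
  unfold BWMRLocal at h; aesop

lemma of_eq_v (huv : u ≠ v) (h : BWMRLocal u v v c p) : c = .Red ∨ p = some (.Blue, u) := by
  unfold BWMRLocal at h; aesop

lemma ne_white_of_eq_v (huv : u ≠ v) (h : BWMRLocal u v v c p) : c ≠ .White := by
  unfold BWMRLocal at h; aesop

end BWMRLocal

def BWMRInv {A : Algo C3} (e : AsyncExec N R C3 φ A) (u v : ZMod N) (t : ℕ) : Prop :=
  (∀ r, BWMRLocal u v ((e.cfg t).pos r) ((e.cfg t).light r) (e.plan t r)) ∧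
    ∃ r, (e.cfg t).pos r = u ∧ (e.cfg t).light r = .Blue

lemma ConfBWMR.exists_BWMRInv {A : Algo C3} {e : AsyncExec N R C3 φ A} {t : ℕ}
    (h : ConfBWMR e t) :
    ∃ u v, (v = u + 1 ∨ v = u - 1) ∧ isBorderNode φ (e.cfg t) u ∧ occupiedNode (e.cfg t) v ∧
      BWMRInv e u v t := by
  obtain ⟨u, v, huv, hbu, hbv, hocc, hU, hBu, hV, -⟩ := h
  refine ⟨u, v, huv, hbu, hbv.1, fun r => ?_, hBu⟩
  rcases hocc _ ⟨r, rfl⟩ with hr | hr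
  · obtain ⟨hc, hp⟩ := hU r hr
    unfold BWMRLocal
    tauto
  · obtain ⟨hc, hp, hred⟩ := hV r hr
    unfold BWMRLocal
    rcases hp with hp | hp
    · exact .inr ⟨hr, .inl ⟨hred hp, .inl hp⟩⟩
    · rcases hc with hc | hc
      · exact .inr ⟨hr, .inl ⟨hc, .inr (.inr hp)⟩⟩
      · exact .inr ⟨hr, .inr ⟨hc, hp⟩⟩

namespace BWMRInv

variable {A : Algo C3} {e : AsyncExec N R C3 φ A} {u v : ZMod N} {t : ℕ}

lemma occupied (h : BWMRInv e u v t) : ∀ w, occupiedNode (e.cfg t) w → w = u ∨ w = v := by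
  rintro w ⟨r, rfl⟩
  exact (h.1 r).eq_or_eq

lemma occupied_u (h : BWMRInv e u v t) : occupiedNode (e.cfg t) u :=
  let ⟨r, hr, _⟩ := h.2
  ⟨r, hr⟩

lemma pos_succ_of_eq_u (h : BWMRInv e u v t) {r : Fin R}
    (hr : (e.cfg t).pos r = u) : (e.cfg (t+1)).pos r = u := by
  have hloc := h.1 r
  rw [hr] at hloc
  rcases e.pos_succ t r with hp | ⟨c, hp⟩
  · rw [hp, hr]
  · exact hloc.target_of_eq_u hp

lemma blue_succ (h : BWMRInv e u v t) {r : Fin R} (hr : (e.cfg t).pos r = u)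
    (hb : (e.cfg t).light r = .Blue) :
    (e.cfg (t+1)).pos r = u ∧ (e.cfg (t+1)).light r = .Blue := by
  have hloc := h.1 r
  rw [hr, hb] at hloc
  refine ⟨h.pos_succ_of_eq_u hr, ?_⟩
  rcases e.light_succ t r with hl | ⟨w, hl⟩
  · rw [hl, hb]
  · rcases hloc.of_eq_u_blue with hp | hp <;> simp_all

end BWMRInv

section Algo1Dynamics

variable {e : AsyncExec N R C3 φ (algo1 φ)} {u v : ZMod N} {t : ℕ}

lemma BWMRInv.lookPlan_of_eq_v (hφ : 1 ≤ φ) (hφN : φ + 2 ≤ N) (huv : v = u + 1 ∨ v = u - 1)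
    (h : BWMRInv e u v t) (c : C3) (dir : Bool) :
    lookPlan (algo1 φ) φ (e.cfg t) v c dir =
      ((algo1Rules φ c (twoNodeView (colorsAt (e.cfg t) v) (colorsAt (e.cfg t) u))).1,
        if (algo1Rules φ c (twoNodeView (colorsAt (e.cfg t) v) (colorsAt (e.cfg t) u))).2 = 1
        then u else v) :=
  lookPlan_algo1_of_two_nodes hφ hφN (adjacent_symm huv) (fun w hw => (h.occupied w hw).symm)
    h.occupied_u c dir

lemma BWMRInv.lookPlan_of_eq_u (hφ : 1 ≤ φ) (hφN : φ + 2 ≤ N) (huv : v = u + 1 ∨ v = u - 1)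
    (h : BWMRInv e u v t) (hv : occupiedNode (e.cfg t) v) {c : C3} (hc : c ≠ .Red) (dir : Bool) :
    lookPlan (algo1 φ) φ (e.cfg t) u c dir = (.Blue, u) := by
  have hne := ne_of_adjacent (by omega) huv
  have hRed : C3.Red ∉ colorsAt (e.cfg t) u := by
    rintro ⟨r, hr, hc⟩
    have hloc := h.1 r
    rw [hr, hc] at hloc
    exact hloc.ne_red_of_eq_u hne rfl
  have hWhite : C3.White ∉ colorsAt (e.cfg t) v := by
    rintro ⟨r, hr, hc⟩
    have hloc := h.1 r
    rw [hr, hc] at hloc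
    exact hloc.ne_white_of_eq_v hne rfl
  rw [lookPlan_algo1_of_two_nodes hφ hφN huv h.occupied hv,
    algo1Rules_of_blue_node hc h.2 hRed hWhite]
  simp

lemma BWMRInv.local_lookPlan (hφ : 1 ≤ φ) (hφN : φ + 2 ≤ N) (huv : v = u + 1 ∨ v = u - 1)
    (h : BWMRInv e u v t) {x : ZMod N} {c : C3} (hx : BWMRLocal u v x c none) (dir : Bool) :
    BWMRLocal u v x c (some (lookPlan (algo1 φ) φ (e.cfg t) x c dir)) := by
  have hne := ne_of_adjacent (by omega) huv
  rcases hx.eq_or_eq with hxu | hxv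
  · subst x
    by_cases hv : occupiedNode (e.cfg t) v
    · rw [h.lookPlan_of_eq_u hφ hφN huv hv (hx.ne_red_of_eq_u hne)]
      unfold BWMRLocal at *; aesop
    · rw [lookPlan_algo1_of_lone_node hφ hφN huv h.occupied hv]
      unfold BWMRLocal at *; aesop
  · subst x
    obtain rfl : c = .Red := by simpa using hx.of_eq_v hne
    rw [h.lookPlan_of_eq_v hφ hφN huv]
    rcases algo1Rules_red (φ := φ) (colorsAt (e.cfg t) v) (colorsAt (e.cfg t) u) with h1 | h1 <;>
      simp [h1, BWMRLocal]

lemma BWMRInv.succ (hφ : 1 ≤ φ) (hφN : φ + 2 ≤ N) (huv : v = u + 1 ∨ v = u - 1)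
    (h : BWMRInv e u v t) : BWMRInv e u v (t+1) := by
  refine ⟨fun r => e.local_succ t r (BWMRLocal u v) (fun _ _ _ _ => BWMRLocal.of_plan)
    (fun hx => h.local_lookPlan hφ hφN huv hx) (h.1 r), ?_⟩
  obtain ⟨r, hr, hb⟩ := h.2
  exact ⟨r, h.blue_succ hr hb⟩

end Algo1Dynamics

section Convergence

variable {A : Algo C3} {e : AsyncExec N R C3 φ A} {u v : ZMod N} {t₀ : ℕ}

lemma pos_eq_u_of_ge (hinv : ∀ t ≥ t₀, BWMRInv e u v t) {r : Fin R} {t : ℕ}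
    (ht : t₀ ≤ t) (hr : (e.cfg t).pos r = u) : ∀ t' ≥ t, (e.cfg t').pos r = u := by
  intro t' ht'
  induction t', ht' using Nat.le_induction with
  | base => exact hr
  | succ t' ht' ih => exact (hinv t' (by omega)).pos_succ_of_eq_u ih

lemma blue_at_u_of_ge (hinv : ∀ t ≥ t₀, BWMRInv e u v t) {r : Fin R} {t : ℕ}
    (ht : t₀ ≤ t) (hr : (e.cfg t).pos r = u) (hb : (e.cfg t).light r = .Blue) :
    ∀ t' ≥ t, (e.cfg t').pos r = u ∧ (e.cfg t').light r = .Blue := by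
  intro t' ht'
  induction t', ht' using Nat.le_induction with
  | base => exact ⟨hr, hb⟩
  | succ t' ht' ih => exact (hinv t' (by omega)).blue_succ ih.1 ih.2

lemma eventually_at_u_or_forall_at_v (hinv : ∀ t ≥ t₀, BWMRInv e u v t) (r : Fin R) :
    (∀ᶠ t in atTop, (e.cfg t).pos r = u) ∨ ∀ t ≥ t₀, (e.cfg t).pos r = v := by
  by_cases hu : ∃ t ≥ t₀, (e.cfg t).pos r = u
  · obtain ⟨t, ht, hr⟩ := hu
    exact .inl (eventually_atTop.2 ⟨t, pos_eq_u_of_ge hinv ht hr⟩)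
  · simp only [not_exists, not_and] at hu
    exact .inr fun t ht => ((hinv t ht).1 r).eq_or_eq.resolve_left (hu t ht)

lemma eventually_red_of_at_v (huv : u ≠ v) (hinv : ∀ t ≥ t₀, BWMRInv e u v t) (r : Fin R) :
    ∀ᶠ t in atTop, (e.cfg t).pos r = v → (e.cfg t).light r = .Red := by
  rcases eventually_at_u_or_forall_at_v hinv r with hu | hv
  · exact hu.mono fun t hru hrv => absurd (hru.symm.trans hrv) huv
  refine eventually_atTop.2 ⟨t₀, fun t ht hrv => ?_⟩
  have hloc := (hinv t ht).1 r
  rw [hrv] at hloc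
  refine (hloc.of_eq_v huv).resolve_right fun hplan => ?_
  obtain ⟨t', ht', hpos, -⟩ := e.exists_pos_light_of_plan_eq_some t r hplan
  exact huv (hpos.symm.trans (hv t' (by omega)))

end Convergence

section Algo1Convergence

variable {e : AsyncExec N R C3 φ (algo1 φ)} {u v : ZMod N} {t₀ : ℕ}

/-- Rule R4b turns the White robots at `u` Blue while `v` stays occupied. -/
lemma eventually_blue_of_at_u (hφ : 1 ≤ φ) (hφN : φ + 2 ≤ N) (huv : v = u + 1 ∨ v = u - 1)
    (hinv : ∀ t ≥ t₀, BWMRInv e u v t) {r₀ : Fin R} (hr₀ : ∀ t ≥ t₀, (e.cfg t).pos r₀ = v)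
    (r : Fin R) : ∀ᶠ t in atTop, (e.cfg t).pos r = u → (e.cfg t).light r = .Blue := by
  have hne := ne_of_adjacent (by omega) huv
  rcases eventually_at_u_or_forall_at_v hinv r with hu | hv
  · obtain ⟨T, hT⟩ := eventually_atTop.1 hu
    obtain ⟨s, hs, dir, hplan⟩ := e.exists_look (max T t₀) r
    have hinvs := hinv s (le_of_max_le_right hs)
    have hrs := hT s (le_of_max_le_left hs)
    have hloc := hinvs.1 r
    rw [hrs] at hloc hplan
    rw [hinvs.lookPlan_of_eq_u hφ hφN huv ⟨r₀, hr₀ s (le_of_max_le_right hs)⟩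
      (hloc.ne_red_of_eq_u hne)] at hplan
    obtain ⟨t', ht', hpos, hb⟩ := e.exists_pos_light_of_plan_eq_some (s+1) r hplan
    refine eventually_atTop.2 ⟨t', fun t ht _ => ?_⟩
    exact (blue_at_u_of_ge hinv (by omega) hpos hb t ht).2
  · exact eventually_atTop.2 ⟨t₀, fun t ht hru => absurd (hru.symm.trans (hv t ht)) hne⟩

lemma eventually_gathered_at_u (hφ : 1 ≤ φ) (hφN : φ + 2 ≤ N) (huv : v = u + 1 ∨ v = u - 1)
    (h₀ : BWMRInv e u v t₀) : ∀ᶠ t in atTop, ∀ r, (e.cfg t).pos r = u := by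
  have hne := ne_of_adjacent (by omega) huv
  have hinv : ∀ t ≥ t₀, BWMRInv e u v t := fun t ht => by
    induction t, ht using Nat.le_induction with
    | base => exact h₀
    | succ t _ ih => exact ih.succ hφ hφN huv
  refine eventually_all.2 fun r₀ => (eventually_at_u_or_forall_at_v hinv r₀).resolve_right
    fun hr₀ => ?_
  obtain ⟨T, hT⟩ := eventually_atTop.1 <| (eventually_ge_atTop t₀).and <| eventually_all.2
    fun r => (eventually_red_of_at_v hne hinv r).and
      (eventually_blue_of_at_u hφ hφN huv hinv hr₀ r)
  obtain ⟨s, hs, dir, hplan⟩ := e.exists_look T r₀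
  obtain ⟨hs₀, hcol⟩ := hT s hs
  have hinvs := hinv s hs₀
  have hpos := hr₀ s hs₀
  have hred := (hcol r₀).1 hpos
  have hcv : colorsAt (e.cfg s) v = {C3.Red} :=
    colorsAt_eq_singleton ⟨r₀, hpos, hred⟩ fun r hr => (hcol r).1 hr
  have hcu : colorsAt (e.cfg s) u = {C3.Blue} :=
    colorsAt_eq_singleton hinvs.2 fun r hr => (hcol r).2 hr
  rw [hpos, hred, hinvs.lookPlan_of_eq_v hφ hφN huv, hcv, hcu, algo1Rules_red_blue] at hplan
  obtain ⟨t', ht', hpos', -⟩ := e.exists_pos_light_of_plan_eq_some (s+1) r₀ (by simpa using hplan)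
  exact hne (hpos'.symm.trans (hr₀ t' (by omega)))

end Algo1Convergence

theorem algo1_gathers_from_BWMR_general
    (N R phi : ℕ) (hN : 3 ≤ N) (hphi : 1 ≤ phi)
    (e : AsyncExec N R C3 phi (algo1 phi))
    (t0 : ℕ) (hconf : ConfBWMR e t0) :
    ∃ (t1 : ℕ) (u : ZMod N), t0 ≤ t1 ∧
      ∀ t', t1 ≤ t' → ∀ r, (e.cfg t').pos r = u := by
  obtain ⟨u, v, huv, hu, hv, h₀⟩ := hconf.exists_BWMRInv
  have hφN := add_two_le_of_isBorderNode (by omega) hu hv huv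
  obtain ⟨T, hT⟩ := eventually_atTop.1 (eventually_gathered_at_u hphi hφN huv h₀)
  exact ⟨max T t0, u, le_max_right _ _, fun t' ht' => hT t' (le_of_max_le_left ht')⟩

/-- **Lemma 7.** Under Algorithm 1, from configuration `Conf BW-MR` the
execution achieves gathering: all robots eventually occupy a single node and
remain there forever. -/
theorem algo1_gathers_from_BWMR
    (N R phi Minit Oinit : ℕ) (hN : 3 ≤ N) (hphi : 1 ≤ phi) (hM : Odd Minit)
    (e : AsyncExec N R C3 phi (algo1 phi))
    (hInit : AdmissibleInit phi (e.cfg 0) C3.White Minit Oinit)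
    (t0 : ℕ) (hconf : ConfBWMR e t0) :
    ∃ (t1 : ℕ) (u : ZMod N), t0 ≤ t1 ∧
      ∀ t', t1 ≤ t' → ∀ r, (e.cfg t').pos r = u :=
  algo1_gathers_from_BWMR_general N R phi hN hphi e t0 hconf

end Gathering
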